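/- arXiv:1806.08054 — 5 statements merged into one kernel-verified Lean document; each statement's English description precedes it below -/
import Mathlib

section
/- Let α, β, γ, B be nonnegative real numbers and set λ = α²γ + (β − α)², assuming λ ≠ 1. Let (H_t)_{t≥0} and (E_t)_{t≥0} be sequences of nonnegative reals with H_0 = 0, H_t ≤ (β − α)²·H_{t−1} + E_{t−1} for all t ≥ 1, and E_t ≤ γB + α²γ·H_t for all t ≥ 0. Then for every t ≥ 0, H_t ≤ γB·(1 − λ^t)/(1 − λ). -/
/-!
Substituting the bound on `E t` into the recursion for `H` gives the linear recursion
`H (t + 1) ≤ λ H t + γB`; unrolled from `H 0 = 0` (this needs `λ ≥ 0`), it bounds `H t` by `γB`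
times the geometric sum `1 + λ + ⋯ + λ ^ (t - 1) = (1 - λ ^ t) / (1 - λ)`.
-/

open Finset

theorem le_geom_sum_mul_of_le_mul_add {R : Type*} [Semiring R] [PartialOrder R] [IsOrderedRing R]
    {u : ℕ → R} {a c : R} (ha : 0 ≤ a) (h0 : u 0 ≤ 0) (hstep : ∀ n, u (n + 1) ≤ a * u n + c) :
    ∀ n, u n ≤ (∑ i ∈ range n, a ^ i) * c
  | 0 => by simpa using h0
  | n + 1 =>
    calc u (n + 1) ≤ a * u n + c := hstep n
      _ ≤ a * ((∑ i ∈ range n, a ^ i) * c) + c := by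
        gcongr; exact le_geom_sum_mul_of_le_mul_add ha h0 hstep n
      _ = (∑ i ∈ range (n + 1), a ^ i) * c := by rw [geom_sum_succ, add_mul, mul_assoc, one_mul]

theorem geom_sum_eq_one_sub_div {K : Type*} [DivisionRing K] {x : K} (hx : x ≠ 1) (n : ℕ) :
    ∑ i ∈ range n, x ^ i = (1 - x ^ n) / (1 - x) := by
  rw [geom_sum_eq hx, ← neg_div_neg_eq, neg_sub, neg_sub]

theorem stmt4_general (α β γ B : ℝ) (hγ : 0 ≤ γ)
    (lam : ℝ) (hlam : lam = α ^ 2 * γ + (β - α) ^ 2) (hlam1 : lam ≠ 1)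
    (H E : ℕ → ℝ)
    (hH0 : H 0 = 0)
    (hHrec : ∀ t : ℕ, 1 ≤ t → H t ≤ (β - α) ^ 2 * H (t - 1) + E (t - 1))
    (hErec : ∀ t : ℕ, E t ≤ γ * B + α ^ 2 * γ * H t) :
    ∀ t : ℕ, H t ≤ γ * B * (1 - lam ^ t) / (1 - lam) := by
  have hstep (n : ℕ) : H (n + 1) ≤ lam * H n + γ * B := by
    have hH := hHrec (n + 1) n.succ_pos
    rw [Nat.add_sub_cancel] at hH
    rw [hlam]
    linear_combination hH + hErec n
  intro t
  calc H t ≤ (∑ i ∈ range t, lam ^ i) * (γ * B) :=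
        le_geom_sum_mul_of_le_mul_add (by rw [hlam]; positivity) hH0.le hstep t
    _ = γ * B * (1 - lam ^ t) / (1 - lam) := by
        rw [geom_sum_eq_one_sub_div hlam1]; ring

/-- Bound on the second moment `H t` of the accumulated quantization error:
`H t ≤ γB·(1 − λ^t)/(1 − λ)` with `λ = α²γ + (β − α)²`. -/
theorem stmt4 (α β γ B : ℝ) (hα : 0 ≤ α) (hβ : 0 ≤ β) (hγ : 0 ≤ γ) (hB : 0 ≤ B)
    (lam : ℝ) (hlam : lam = α ^ 2 * γ + (β - α) ^ 2) (hlam1 : lam ≠ 1)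
    (H E : ℕ → ℝ) (hHnn : ∀ t, 0 ≤ H t) (hEnn : ∀ t, 0 ≤ E t)
    (hH0 : H 0 = 0)
    (hHrec : ∀ t : ℕ, 1 ≤ t → H t ≤ (β - α) ^ 2 * H (t - 1) + E (t - 1))
    (hErec : ∀ t : ℕ, E t ≤ γ * B + α ^ 2 * γ * H t) :
    ∀ t : ℕ, H t ≤ γ * B * (1 - lam ^ t) / (1 - lam) :=
  stmt4_general α β γ B hγ lam hlam hlam1 H E hH0 hHrec hErec
end

section
/- Let α, β, γ, B be nonnegative real numbers and set λ = α²γ + (β − α)², assuming λ ≠ 1. Let (H_t)_{t≥0} and (E_t)_{t≥0} be sequences of nonnegative reals with H_0 = 0, H_t ≤ (β − α)²·H_{t−1} + E_{t−1} for all t ≥ 1, and E_t ≤ γB + α²γ·H_t for all t ≥ 0. Then for every t ≥ 0, E_t ≤ (1 + α²γ·(1 − λ^t)/(1 − λ))·γB. -/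
/-!
Substituting the bound on `E (t - 1)` into the recursion for `H` gives
`H t ≤ λ H (t - 1) + γB`, so from `H 0 = 0` the accumulated error is at most the geometric sum
`γB (1 + λ + ⋯ + λ^(t-1)) = γB (1 - λ^t) / (1 - λ)`; feeding this back into the bound on `E t`
gives the claim.
-/

open Finset

theorem le_mul_geom_sum_of_le_mul_add {R : Type*} [CommSemiring R] [PartialOrder R]
    [IsOrderedRing R] {x : ℕ → R} {a c : R} (ha : 0 ≤ a) (h0 : x 0 ≤ 0)
    (hrec : ∀ n, x (n + 1) ≤ a * x n + c) (n : ℕ) : x n ≤ c * ∑ i ∈ range n, a ^ i := by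
  induction n with
  | zero => simpa using h0
  | succ n ih =>
    calc x (n + 1) ≤ a * x n + c := hrec n
      _ ≤ a * (c * ∑ i ∈ range n, a ^ i) + c := by gcongr
      _ = c * ∑ i ∈ range (n + 1), a ^ i := by rw [geom_sum_succ]; ring

theorem stmt5_general (α β γ B : ℝ) (hγ : 0 ≤ γ)
    (lam : ℝ) (hlam : lam = α ^ 2 * γ + (β - α) ^ 2) (hlam1 : lam ≠ 1)
    (H E : ℕ → ℝ)
    (hH0 : H 0 = 0)
    (hHrec : ∀ t : ℕ, 1 ≤ t → H t ≤ (β - α) ^ 2 * H (t - 1) + E (t - 1))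
    (hErec : ∀ t : ℕ, E t ≤ γ * B + α ^ 2 * γ * H t) :
    ∀ t : ℕ, E t ≤ (1 + α ^ 2 * γ * (1 - lam ^ t) / (1 - lam)) * (γ * B) := by
  have hlam_nonneg : 0 ≤ lam := by rw [hlam]; positivity
  have hH_step (t : ℕ) : H (t + 1) ≤ lam * H t + γ * B := by
    have hH_succ := hHrec (t + 1) (Nat.le_add_left 1 t)
    rw [Nat.add_sub_cancel] at hH_succ
    subst hlam
    linear_combination hH_succ + hErec t
  intro t
  have hH_bound := le_mul_geom_sum_of_le_mul_add hlam_nonneg hH0.le hH_step t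
  rw [geom_sum_eq_one_sub_div hlam1] at hH_bound
  calc E t ≤ γ * B + α ^ 2 * γ * H t := hErec t
    _ ≤ γ * B + α ^ 2 * γ * (γ * B * ((1 - lam ^ t) / (1 - lam))) := by gcongr
    _ = (1 + α ^ 2 * γ * (1 - lam ^ t) / (1 - lam)) * (γ * B) := by ring

/-- Lemma 2 of the paper (sequence form): the second moment `E t` of the quantization
error satisfies `E t ≤ (1 + α²γ·(1 − λ^t)/(1 − λ))·γB` with `λ = α²γ + (β − α)²`. -/
theorem stmt5 (α β γ B : ℝ) (hα : 0 ≤ α) (hβ : 0 ≤ β) (hγ : 0 ≤ γ) (hB : 0 ≤ B)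
    (lam : ℝ) (hlam : lam = α ^ 2 * γ + (β - α) ^ 2) (hlam1 : lam ≠ 1)
    (H E : ℕ → ℝ) (hHnn : ∀ t, 0 ≤ H t) (hEnn : ∀ t, 0 ≤ E t)
    (hH0 : H 0 = 0)
    (hHrec : ∀ t : ℕ, 1 ≤ t → H t ≤ (β - α) ^ 2 * H (t - 1) + E (t - 1))
    (hErec : ∀ t : ℕ, E t ≤ γ * B + α ^ 2 * γ * H t) :
    ∀ t : ℕ, E t ≤ (1 + α ^ 2 * γ * (1 - lam ^ t) / (1 - lam)) * (γ * B) :=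
  stmt5_general α β γ B hγ lam hlam hlam1 H E hH0 hHrec hErec
end

section
/- Let α, β, γ, B be nonnegative real numbers and set λ = α²γ + (β − α)², assuming λ < 1. Let (H_t)_{t≥0} and (E_t)_{t≥0} be sequences of nonnegative reals with H_0 = 0, H_t ≤ (β − α)²·H_{t−1} + E_{t−1} for all t ≥ 1, and E_t ≤ γB + α²γ·H_t for all t ≥ 0. Then for every t ≥ 0, E_t ≤ (1 + α²γ/(1 − λ))·γB; i.e., the bound is uniform in t and hence the variance bound of the quantization error does not diverge during optimization. -/
/-!
Substituting the bound on `E` into the recursion for `H` gives the affine recursion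
`H (t + 1) ≤ λ H t + γB` with `0 ≤ λ < 1`, whose fixed point `γB / (1 - λ)` bounds `H t`
for all `t` by induction; feeding this back into the bound on `E` gives the claim.
-/

theorem le_div_one_sub_of_le_mul_add {a b : ℝ} {x : ℕ → ℝ} (ha : 0 ≤ a) (ha1 : a < 1)
    (h0 : x 0 ≤ b / (1 - a)) (hstep : ∀ n, x (n + 1) ≤ a * x n + b) :
    ∀ n, x n ≤ b / (1 - a) := by
  have hfix : a * (b / (1 - a)) + b = b / (1 - a) := by
    field_simp [(sub_pos.mpr ha1).ne']
    ring
  intro n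
  induction n with
  | zero => exact h0
  | succ n ih =>
    calc x (n + 1) ≤ a * x n + b := hstep n
      _ ≤ a * (b / (1 - a)) + b := by gcongr
      _ = b / (1 - a) := hfix

theorem stmt6_general (α β γ B : ℝ) (hγ : 0 ≤ γ) (hB : 0 ≤ B)
    (lam : ℝ) (hlam : lam = α ^ 2 * γ + (β - α) ^ 2) (hlam1 : lam < 1)
    (H E : ℕ → ℝ)
    (hH0 : H 0 = 0)
    (hHrec : ∀ t : ℕ, 1 ≤ t → H t ≤ (β - α) ^ 2 * H (t - 1) + E (t - 1))
    (hErec : ∀ t : ℕ, E t ≤ γ * B + α ^ 2 * γ * H t) :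
    ∀ t : ℕ, E t ≤ (1 + α ^ 2 * γ / (1 - lam)) * (γ * B) := by
  have hlam0 : 0 ≤ lam := by rw [hlam]; positivity
  have hHstep : ∀ t, H (t + 1) ≤ lam * H t + γ * B := fun t => by
    have := hHrec (t + 1) (Nat.le_add_left 1 t)
    rw [Nat.add_sub_cancel] at this
    rw [hlam]
    linarith [hErec t]
  have hHbound : ∀ t, H t ≤ γ * B / (1 - lam) :=
    le_div_one_sub_of_le_mul_add hlam0 hlam1
      (by rw [hH0]; exact div_nonneg (by positivity) (by linarith)) hHstep
  intro t
  calc E t ≤ γ * B + α ^ 2 * γ * H t := hErec t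
    _ ≤ γ * B + α ^ 2 * γ * (γ * B / (1 - lam)) := by gcongr; exact hHbound t
    _ = (1 + α ^ 2 * γ / (1 - lam)) * (γ * B) := by ring

/-- Uniform-in-`t` variance bound: if `λ = α²γ + (β − α)² < 1`, then
`E t ≤ (1 + α²γ/(1 − λ))·γB` for every `t`; the bound does not diverge. -/
theorem stmt6 (α β γ B : ℝ) (hα : 0 ≤ α) (hβ : 0 ≤ β) (hγ : 0 ≤ γ) (hB : 0 ≤ B)
    (lam : ℝ) (hlam : lam = α ^ 2 * γ + (β - α) ^ 2) (hlam1 : lam < 1)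
    (H E : ℕ → ℝ) (hHnn : ∀ t, 0 ≤ H t) (hEnn : ∀ t, 0 ≤ E t)
    (hH0 : H 0 = 0)
    (hHrec : ∀ t : ℕ, 1 ≤ t → H t ≤ (β - α) ^ 2 * H (t - 1) + E (t - 1))
    (hErec : ∀ t : ℕ, E t ≤ γ * B + α ^ 2 * γ * H t) :
    ∀ t : ℕ, E t ≤ (1 + α ^ 2 * γ / (1 - lam)) * (γ * B) :=
  stmt6_general α β γ B hγ hB lam hlam hlam1 H E hH0 hHrec hErec
end

section
/- Let A be a d×d real matrix, b, w*, w^{(0)} ∈ ℝ^d with A·w* + b = 0, and let η, α, β be real numbers. Let (ξ^{(t')})_{t'≥0} and (ε^{(t')})_{t'≥0} be sequences in ℝ^d, define h^{(0)} = 0 and h^{(t')} = (β − α)·h^{(t'−1)} − ε^{(t'−1)} for t' ≥ 1, and define the iterates w^{(t'+1)} = w^{(t')} − η·(A·w^{(t')} + b + ξ^{(t')} + α·h^{(t')} + ε^{(t')}). Set H = I − η·A and, for 0 ≤ t' ≤ t, Θ^{(t')} = H^{t−t'} − α·Σ_{t''=t'+1}^{t} (β − α)^{t''−t'−1}·H^{t−t''}.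 Then for every t ≥ 0, w^{(t+1)} − w* = H^{t+1}·(w^{(0)} − w*) − η·Σ_{t'=0}^{t} H^{t−t'}·ξ^{(t')} − η·Σ_{t'=0}^{t} Θ^{(t')}·ε^{(t')}. -/
/-!
The error `eₙ = wₙ - w*` satisfies `eₙ₊₁ = H eₙ - η (ξₙ + α hₙ + εₙ)`, while
`hₙ₊₁ = (β - α) hₙ - εₙ` with `h₀ = 0`. Unrolling both first-order linear recurrences and
exchanging the order of the resulting double sum over `s < k ≤ t` collects the total coefficient
of each `εₛ` into `Θₛ`.
-/

open Finset

theorem eq_pow_smul_add_sum_of_recurrence {M V : Type*} [Monoid M] [AddCommMonoid V]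
    [DistribMulAction M V] (g : M) (x u : ℕ → V) (hx : ∀ n, x (n + 1) = g • x n + u n)
    (n : ℕ) : x n = g ^ n • x 0 + ∑ k ∈ range n, g ^ (n - 1 - k) • u k := by
  induction n with
  | zero => simp
  | succ n ih =>
    have hpow : ∀ k ∈ range n, g • g ^ (n - 1 - k) • u k = g ^ (n - k) • u k := by
      intro k hk
      rw [smul_smul, ← pow_succ', show n - 1 - k + 1 = n - k by grind]
    rw [hx, ih, smul_add, smul_sum, sum_congr rfl hpow, smul_smul, ← pow_succ',
      sum_range_succ, Nat.add_sub_cancel, Nat.sub_self, pow_zero, one_smul, add_assoc]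

theorem sum_pow_smul_sum_pow_smul {R A V : Type*} [CommSemiring R] [Semiring A] [Module R A]
    [AddCommMonoid V] [Module R V] [Module A V] [IsScalarTower R A V] [SMulCommClass A R V]
    (g : A) (c : R) (u : ℕ → V) (t : ℕ) :
    ∑ k ∈ range (t + 1), g ^ (t - k) • ∑ s ∈ range k, c ^ (k - 1 - s) • u s
      = ∑ s ∈ range (t + 1),
          (∑ k ∈ Ico (s + 1) (t + 1), c ^ (k - s - 1) • g ^ (t - k)) • u s := by
  simp only [smul_sum, sum_smul, smul_assoc, smul_comm (g ^ _) (c ^ _)]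
  simp only [range_eq_Ico, sum_Ico_Ico_comm', Nat.sub_right_comm _ 1]

theorem gradient_step_sub_of_mulVec_add_eq_zero {n R : Type*} [Fintype n] [DecidableEq n]
    [CommRing R]
    (A : Matrix n n R) (b wstar w r : n → R) (η : R) (hopt : A.mulVec wstar + b = 0) :
    w - η • (A.mulVec w + b + r) - wstar = (1 - η • A) • (w - wstar) + -η • r := by
  have hb : b = -A.mulVec wstar := eq_neg_of_add_eq_zero_right hopt
  simp only [Matrix.smul_eq_mulVec, Matrix.sub_mulVec, Matrix.one_mulVec, Matrix.smul_mulVec,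
    Matrix.mulVec_sub, hb]
  module

/-- Deterministic error-decomposition identity of ECQ-SGD for the quadratic objective:
`w^{(t+1)} − w* = H^{t+1}(w^{(0)} − w*) − η ∑ H^{t−t'} ξ^{(t')} − η ∑ Θ^{(t')} ε^{(t')}`. -/
theorem stmt10 (d : ℕ) (A : Matrix (Fin d) (Fin d) ℝ) (b wstar w0 : Fin d → ℝ)
    (hopt : A.mulVec wstar + b = 0) (η α β : ℝ)
    (ξ ε : ℕ → Fin d → ℝ) (h : ℕ → Fin d → ℝ)
    (h0 : h 0 = 0)
    (hrec : ∀ t' : ℕ, 1 ≤ t' → h t' = (β - α) • h (t' - 1) - ε (t' - 1))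
    (w : ℕ → Fin d → ℝ) (hw0 : w 0 = w0)
    (hwrec : ∀ t' : ℕ,
      w (t' + 1) = w t' - η • (A.mulVec (w t') + b + ξ t' + α • h t' + ε t'))
    (H : Matrix (Fin d) (Fin d) ℝ) (hH : H = 1 - η • A)
    (t : ℕ) (Θ : ℕ → Matrix (Fin d) (Fin d) ℝ)
    (hΘ : ∀ t', Θ t' = H ^ (t - t')
        - α • ∑ t'' ∈ Finset.Ico (t' + 1) (t + 1), (β - α) ^ (t'' - t' - 1) • H ^ (t - t'')) :
    w (t + 1) - wstar = (H ^ (t + 1)).mulVec (w0 - wstar)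
      - η • ∑ t' ∈ Finset.range (t + 1), (H ^ (t - t')).mulVec (ξ t')
      - η • ∑ t' ∈ Finset.range (t + 1), (Θ t').mulVec (ε t') := by
  have hh : ∀ n, h n = ∑ s ∈ range n, (β - α) ^ (n - 1 - s) • -ε s := fun n => by
    simpa [h0] using eq_pow_smul_add_sum_of_recurrence (β - α) h (fun n => -ε n)
      (fun n => by simpa [sub_eq_add_neg] using hrec (n + 1) n.succ_pos) n
  have herr := eq_pow_smul_add_sum_of_recurrence H (fun n => w n - wstar)
    (fun n => -η • (ξ n + α • h n + ε n))
    (fun n => by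
      rw [hwrec, hH, ← gradient_step_sub_of_mulVec_add_eq_zero A b wstar (w n) _ η hopt]
      simp only [add_assoc]) (t + 1)
  have hfeedback : ∑ k ∈ range (t + 1), H ^ (t - k) • (α • h k + ε k)
      = ∑ s ∈ range (t + 1), Θ s • ε s := by
    simp only [hh, hΘ, smul_add, smul_comm _ α, sum_add_distrib, ← smul_sum,
      sum_pow_smul_sum_pow_smul, sub_smul, smul_assoc, smul_neg, sum_sub_distrib, sum_neg_distrib]
    abel
  simp only [Nat.add_sub_cancel, hw0] at herr
  simp only [← Matrix.smul_eq_mulVec, herr, ← hfeedback]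
  simp only [neg_smul, smul_neg, smul_comm _ η, add_assoc, smul_add, sum_add_distrib,
    sum_neg_distrib, smul_sum]
  abel
end

section
/- Let A be a symmetric d×d real matrix and a₁, η, α, β real numbers with η ≥ 0, η·a₁ < 1, α ≥ 0 and β ≥ α, such that A − a₁·I is positive semidefinite and H = I − η·A is positive semidefinite. Set ν = (β − α)/(1 − η·a₁) and, for natural numbers t' < t, Θ^{(t')} = H^{t−t'} − α·Σ_{t''=t'+1}^{t} (β − α)^{t''−t'−1}·H^{t−t''}. Then Θ^{(t')} ⪯ (1 − (α/(1 − η·a₁))·Σ_{k=0}^{t−t'−1} ν^{k})·H^{t−t'} in the Loewner order; when ν ≠ 1 the coefficient equals 1 − (α/(1 − η·a₁))·(1 − ν^{t−t'})/(1 − ν). -/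
/-! Everything is a real polynomial in `H`, so by the continuous functional calculus it suffices
to check that this polynomial is nonnegative on the spectrum of `H`, which lies in `[0, c]` with
`c = 1 - η a₁` because `c • 1 - H = η • (A - a₁ • 1)`. After reindexing, the difference of the two
sides is `α ∑_{k < n} (β - α)^k H^(n-1-k) (1 - (H / c)^(k+1))`, and on `[0, c]` each term is
nonnegative. -/

open Finset Polynomial
open scoped ComplexOrder MatrixOrder

theorem div_mul_geom_sum_div_mul_pow_le {α b c x : ℝ} (hα : 0 ≤ α) (hb : 0 ≤ b) (hx : 0 ≤ x)
    (hxc : x ≤ c) (n : ℕ) :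
    α / c * (∑ k ∈ range n, (b / c) ^ k) * x ^ n ≤ α * ∑ k ∈ range n, b ^ k * x ^ (n - 1 - k) := by
  rw [mul_sum, mul_sum, sum_mul]
  refine sum_le_sum fun k hk => ?_
  have hsplit : x ^ n = x ^ (n - 1 - k) * x ^ (k + 1) := by
    rw [← pow_add]; congr 1; have := mem_range.mp hk; omega
  have hratio : (x / c) ^ (k + 1) ≤ 1 :=
    pow_le_one₀ (div_nonneg hx (hx.trans hxc)) (div_le_one_of_le₀ hxc (hx.trans hxc))
  calc α / c * (b / c) ^ k * x ^ n = α * (b ^ k * x ^ (n - 1 - k)) * (x / c) ^ (k + 1) := by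
        rw [hsplit]; ring
    _ ≤ α * (b ^ k * x ^ (n - 1 - k)) := mul_le_of_le_one_right (by positivity) hratio

section
variable {n 𝕜 : Type*} [Fintype n] [DecidableEq n] [RCLike 𝕜]

theorem Matrix.PosSemidef.spectrum_subset_Icc {H : Matrix n n 𝕜} {c : ℝ} (hH : H.PosSemidef)
    (hcH : (c • 1 - H).PosSemidef) : spectrum ℝ H ⊆ Set.Icc 0 c := by
  intro x hx
  have hle : 0 ≤ c - x := by
    have h := spectrum_nonneg_of_nonneg (𝕜 := ℝ) (nonneg_iff_posSemidef.mpr hcH)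
    rw [← Algebra.algebraMap_eq_smul_one, ← spectrum.singleton_sub_eq] at h
    exact h (Set.sub_mem_sub rfl hx)
  exact ⟨spectrum_nonneg_of_nonneg (nonneg_iff_posSemidef.mpr hH) hx, by linarith⟩

theorem Matrix.IsHermitian.posSemidef_aeval {H : Matrix n n 𝕜} (hH : H.IsHermitian) (p : ℝ[X])
    (hp : ∀ x ∈ spectrum ℝ H, 0 ≤ p.eval x) : (aeval H p).PosSemidef := by
  rw [← nonneg_iff_posSemidef, ← cfc_polynomial p H hH.isSelfAdjoint]
  exact cfc_nonneg hp

theorem Matrix.PosSemidef.smul_sum_pow_sub_smul_pow {H : Matrix n n 𝕜} {α b c : ℝ} (hH : H.PosSemidef)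
    (hcH : (c • 1 - H).PosSemidef) (hα : 0 ≤ α) (hb : 0 ≤ b) (m : ℕ) :
    (α • ∑ k ∈ range m, b ^ k • H ^ (m - 1 - k)
      - (α / c * ∑ k ∈ range m, (b / c) ^ k) • H ^ m).PosSemidef := by
  let p : ℝ[X] := α • ∑ k ∈ range m, b ^ k • X ^ (m - 1 - k)
    - (α / c * ∑ k ∈ range m, (b / c) ^ k) • X ^ m
  have hp : aeval H p = α • ∑ k ∈ range m, b ^ k • H ^ (m - 1 - k)
      - (α / c * ∑ k ∈ range m, (b / c) ^ k) • H ^ m := by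
    simp [p, map_sum]
  rw [← hp]
  refine hH.isHermitian.posSemidef_aeval p fun x hx => ?_
  obtain ⟨hx0, hxc⟩ := hH.spectrum_subset_Icc hcH hx
  simpa [p, eval_finsetSum] using div_mul_geom_sum_div_mul_pow_le hα hb hx0 hxc m

end

theorem stmt13_general (d : ℕ) (A : Matrix (Fin d) (Fin d) ℝ)
    (a₁ η α β : ℝ) (hη : 0 ≤ η) (hα : 0 ≤ α) (hβα : α ≤ β)
    (hA1 : (A - a₁ • 1).PosSemidef)
    (H : Matrix (Fin d) (Fin d) ℝ) (hH : H = 1 - η • A) (hHps : H.PosSemidef)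
    (ν : ℝ) (hν : ν = (β - α) / (1 - η * a₁))
    (t' t : ℕ)
    (Θ : Matrix (Fin d) (Fin d) ℝ)
    (hΘ : Θ = H ^ (t - t')
        - α • ∑ t'' ∈ Finset.Ico (t' + 1) (t + 1), (β - α) ^ (t'' - t' - 1) • H ^ (t - t'')) :
    ((1 - α / (1 - η * a₁) * ∑ k ∈ Finset.range (t - t'), ν ^ k) • H ^ (t - t')
        - Θ).PosSemidef
    ∧ (ν ≠ 1 →
        (1 - α / (1 - η * a₁) * ∑ k ∈ Finset.range (t - t'), ν ^ k)
          = 1 - α / (1 - η * a₁) * ((1 - ν ^ (t - t')) / (1 - ν))) := by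
  have hcH : ((1 - η * a₁) • 1 - H).PosSemidef := by
    rw [show (1 - η * a₁) • 1 - H = η • (A - a₁ • 1) by rw [hH]; module]
    exact hA1.smul hη
  have hreindex : ∑ t'' ∈ Ico (t' + 1) (t + 1), (β - α) ^ (t'' - t' - 1) • H ^ (t - t'')
      = ∑ k ∈ range (t - t'), (β - α) ^ k • H ^ (t - t' - 1 - k) := by
    rw [sum_Ico_eq_sum_range, Nat.add_sub_add_right]
    refine sum_congr rfl fun k _ => ?_
    congr 2 <;> omega
  refine ⟨?_, fun hν1 => ?_⟩
  · rw [hΘ, hreindex, hν, sub_smul, one_smul, sub_sub_sub_cancel_left]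
    exact hHps.smul_sum_pow_sub_smul_pow hcH hα (sub_nonneg.mpr hβα) (t - t')
  · rw [geom_sum_eq hν1, ← neg_div_neg_eq (ν ^ _ - 1), neg_sub, neg_sub]

/-- Lemma 3 of the paper: Loewner bound on the quantization-error multiplier
`Θ^{(t')} = H^{t−t'} − α ∑_{t''=t'+1}^{t} (β − α)^{t''−t'−1} H^{t−t''}`:
`Θ^{(t')} ⪯ (1 − (α/(1 − ηa₁))·∑_{k<t−t'} ν^k)·H^{t−t'}` with `ν = (β−α)/(1−ηa₁)`,
and for `ν ≠ 1` the coefficient equals `1 − (α/(1 − ηa₁))·(1 − ν^{t−t'})/(1 − ν)`. -/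
theorem stmt13 (d : ℕ) (A : Matrix (Fin d) (Fin d) ℝ) (hA : A.IsSymm)
    (a₁ η α β : ℝ) (hη : 0 ≤ η) (hηa : η * a₁ < 1) (hα : 0 ≤ α) (hβα : α ≤ β)
    (hA1 : (A - a₁ • 1).PosSemidef)
    (H : Matrix (Fin d) (Fin d) ℝ) (hH : H = 1 - η • A) (hHps : H.PosSemidef)
    (ν : ℝ) (hν : ν = (β - α) / (1 - η * a₁))
    (t' t : ℕ) (htt : t' < t)
    (Θ : Matrix (Fin d) (Fin d) ℝ)
    (hΘ : Θ = H ^ (t - t')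
        - α • ∑ t'' ∈ Finset.Ico (t' + 1) (t + 1), (β - α) ^ (t'' - t' - 1) • H ^ (t - t'')) :
    ((1 - α / (1 - η * a₁) * ∑ k ∈ Finset.range (t - t'), ν ^ k) • H ^ (t - t')
        - Θ).PosSemidef
    ∧ (ν ≠ 1 →
        (1 - α / (1 - η * a₁) * ∑ k ∈ Finset.range (t - t'), ν ^ k)
          = 1 - α / (1 - η * a₁) * ((1 - ν ^ (t - t')) / (1 - ν))) :=
  stmt13_general d A a₁ η α β hη hα hβα hA1 H hH hHps ν hν t' t Θ hΘ
end
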